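/- arXiv:2511.05917 — 2 statements merged into one kernel-verified Lean document; each statement's English description precedes it below -/
import Mathlib

section
/- Let n ≥ 2k ≥ 4 and 4 ≤ b ≤ k+1. Let A = F([2,b]) ∪ F({1,b}) ⊆ C([n],k), where F([2,b]) = {S : s_j ≤ j+1 for all j ≤ b−1} and F({1,b}) = {S : s_1 = 1 and s_2 ≤ b}. Then |A| = C(n−1, k−1) − C(n−b, k−1) + C(n−b, k−b+1). -/
/-- The `i`-th smallest element (0-indexed) of a finite set of naturals. -/
def nth (A : Finset ℕ) (i : ℕ) : ℕ := (Finset.sort A (· ≤ ·)).getD i 0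

/-!
Split the `k`-subsets of `[1, n]` according to whether they contain `1`. For `S = {1} ∪ T` the
condition `s_2 ≤ 3` of `F([2,b])` already implies `s_2 ≤ b`, so `S` lies in the family iff `T`
meets `[2, b]`: there are `C(n-1, k-1) - C(n-b, k-1)` such sets. If `1 ∉ S`, then `S` lies in the
family iff its first `b - 1` elements are `2, 3, …, b`, i.e. `[2, b] ⊆ S`, and the remaining
`k + 1 - b` elements are chosen freely from `[b+1, n]`.
-/

open Finset

section Nth

variable {S T : Finset ℕ} {a b i j m x : ℕ}

lemma nth_eq_getElem (hi : i < #S) :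
    nth S i = (S.sort (· ≤ ·))[i]'(by rwa [length_sort]) :=
  List.getD_eq_getElem _ _ _

lemma nth_mem (hi : i < #S) : nth S i ∈ S := by
  rw [nth_eq_getElem hi]
  exact (mem_sort _).1 (List.getElem_mem _)

lemma nth_lt_nth (hij : i < j) (hj : j < #S) : nth S i < nth S j := by
  rw [nth_eq_getElem (hij.trans hj), nth_eq_getElem hj]
  exact S.sortedLT_sort.strictMono_get (Fin.mk_lt_mk.mpr hij)

lemma nth_le_nth (hij : i ≤ j) (hj : j < #S) : nth S i ≤ nth S j := by
  rcases hij.lt_or_eq with h | rfl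
  · exact (nth_lt_nth h hj).le
  · rfl

lemma exists_nth_eq (hx : x ∈ S) : ∃ i < #S, nth S i = x := by
  obtain ⟨i, hi, hget⟩ := List.mem_iff_getElem.1 ((mem_sort (· ≤ ·)).2 hx)
  have hi' : i < #S := by rwa [length_sort] at hi
  exact ⟨i, hi', (nth_eq_getElem hi').trans hget⟩

lemma nth_zero_le_iff (hS : S.Nonempty) : nth S 0 ≤ b ↔ ∃ x ∈ S, x ≤ b := by
  refine ⟨fun h => ⟨_, nth_mem hS.card_pos, h⟩, fun ⟨x, hx, hxb⟩ => ?_⟩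
  obtain ⟨i, hi, rfl⟩ := exists_nth_eq hx
  exact (nth_le_nth i.zero_le hi).trans hxb

lemma sort_insert_of_forall_lt (h : ∀ x ∈ T, a < x) :
    (insert a T).sort (· ≤ ·) = a :: T.sort (· ≤ ·) :=
  sort_insert _ (fun x hx => (h x hx).le) fun ha => (h a ha).false

lemma nth_insert_zero (h : ∀ x ∈ T, a < x) : nth (insert a T) 0 = a := by
  simp only [nth, sort_insert_of_forall_lt h, List.getD_cons_zero]

lemma nth_insert_succ (h : ∀ x ∈ T, a < x) (j : ℕ) : nth (insert a T) (j + 1) = nth T j := by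
  simp only [nth, sort_insert_of_forall_lt h, List.getD_cons_succ]

lemma add_le_nth (h : ∀ x ∈ S, a ≤ x) (hj : j < #S) : j + a ≤ nth S j := by
  induction j with
  | zero => simpa using h _ (nth_mem hj)
  | succ j ih =>
    have := ih (by omega)
    have := nth_lt_nth (lt_add_one j) hj
    omega

lemma forall_nth_le_add_iff (h : ∀ x ∈ S, a ≤ x) (hm : m ≤ #S) :
    (∀ j < m, nth S j ≤ j + a) ↔ Ico a (m + a) ⊆ S := by
  constructor
  · intro hle x hx
    rw [mem_Ico] at hx
    have hj : x - a < #S := by omega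
    have hx_eq : nth S (x - a) = x :=
      le_antisymm (by have := hle (x - a) (by omega); omega) (by have := add_le_nth h hj; omega)
    exact hx_eq ▸ nth_mem hj
  · intro hsub j
    induction j using Nat.strong_induction_on with
    | _ j ih =>
      intro hj
      have hja : j + a ∈ S := hsub (mem_Ico.2 ⟨by omega, by omega⟩)
      obtain ⟨p, hp, hpj⟩ := exists_nth_eq hja
      have hpj_le : p ≤ j := by have := add_le_nth h hp; omega
      rcases hpj_le.lt_or_eq with hlt | rfl
      · have := ih p hlt (hlt.trans hj)
        omega
      · exact hpj.le

end Nth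

section Family

variable {S T : Finset ℕ} {b : ℕ}

lemma family_insert_one_iff (hb : 3 ≤ b) (hT : ∀ x ∈ T, 1 < x) (hT₀ : T.Nonempty) :
    ((∀ j < b - 1, nth (insert 1 T) j ≤ j + 2) ∨
      (nth (insert 1 T) 0 = 1 ∧ nth (insert 1 T) 1 ≤ b)) ↔ ∃ x ∈ T, x ≤ b := by
  have h₁ : nth (insert 1 T) 1 = nth T 0 := nth_insert_succ hT 0
  rw [nth_insert_zero hT, h₁, ← nth_zero_le_iff hT₀]
  constructor
  · rintro (hle | ⟨-, hle⟩)
    · have := hle 1 (by omega)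
      rw [h₁] at this
      omega
    · exact hle
  · exact fun hle => Or.inr ⟨rfl, hle⟩

lemma family_iff_of_two_le (hS : ∀ x ∈ S, 2 ≤ x) (hb : 2 ≤ b) (hbS : b ≤ #S + 1) :
    ((∀ j < b - 1, nth S j ≤ j + 2) ∨ (nth S 0 = 1 ∧ nth S 1 ≤ b)) ↔ Icc 2 b ⊆ S := by
  have h₀ : 2 ≤ nth S 0 := hS _ (nth_mem (by omega))
  rw [← Ico_add_one_right_eq_Icc, show b + 1 = b - 1 + 2 by omega,
    ← forall_nth_le_add_iff hS (by omega)]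
  constructor
  · rintro (h | ⟨h, -⟩)
    · exact h
    · omega
  · exact Or.inl

end Family

section Counting

variable {α : Type*} [DecidableEq α]

lemma card_filter_powersetCard_insert {x : α} {U : Finset α} (hx : x ∉ U) (k : ℕ)
    (p : Finset α → Prop) [DecidablePred p] :
    #(((insert x U).powersetCard (k + 1)).filter p) =
      #((U.powersetCard k).filter fun T => p (insert x T)) +
        #((U.powersetCard (k + 1)).filter p) := by
  have hinj : Set.InjOn (insert x) (U.powersetCard k : Set (Finset α)) := fun T hT T' hT' h => by
    rw [← erase_insert (s := T) (notMem_mono (mem_powersetCard.1 hT).1 hx),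
      ← erase_insert (s := T') (notMem_mono (mem_powersetCard.1 hT').1 hx), h]
  rw [powersetCard_succ_insert hx, filter_union, card_union_of_disjoint, filter_image,
    card_image_of_injOn (hinj.mono (filter_subset _ _)), add_comm]
  refine disjoint_left.2 fun S hS hS' => ?_
  obtain ⟨T, -, rfl⟩ := mem_image.1 (mem_filter.1 hS').1
  exact hx ((mem_powersetCard.1 (mem_filter.1 hS).1).1 (mem_insert_self x T))

lemma card_filter_powersetCard_not_subset {U V : Finset α} (hVU : V ⊆ U) (k : ℕ) :
    #((U.powersetCard k).filter fun T => ¬T ⊆ V) = (#U).choose k - (#V).choose k := by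
  have hV : (U.powersetCard k).filter (· ⊆ V) = V.powersetCard k := by
    ext T
    simp only [mem_filter, mem_powersetCard]
    exact ⟨fun ⟨⟨_, hk⟩, hTV⟩ => ⟨hTV, hk⟩, fun ⟨hTV, hk⟩ => ⟨⟨hTV.trans hVU, hk⟩, hTV⟩⟩
  have := card_filter_add_card_filter_not (s := U.powersetCard k) (· ⊆ V)
  rw [hV, card_powersetCard, card_powersetCard] at this
  omega

end Counting

theorem stmt_14_general (n k b : ℕ) (hn : 2 * k ≤ n)
    (hb : 4 ≤ b) (hbk : b ≤ k + 1) :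
    ((Finset.Icc 1 n).powerset.filter
      (fun S => S.card = k ∧
        ((∀ j < b - 1, nth S j ≤ j + 2) ∨ (nth S 0 = 1 ∧ nth S 1 ≤ b)))).card
    = Nat.choose (n - 1) (k - 1) - Nat.choose (n - b) (k - 1)
        + Nat.choose (n - b) (k + 1 - b) := by
  obtain ⟨k, rfl⟩ : ∃ k', k = k' + 1 := ⟨k - 1, by omega⟩
  have hsplit : Icc 1 n = insert 1 (Icc 2 n) := (insert_Icc_add_one_left_eq_Icc (by omega)).symm
  rw [← filter_filter, ← powersetCard_eq_filter, hsplit,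
    card_filter_powersetCard_insert (by simp), add_tsub_cancel_right]
  congr 1
  · rw [show n - 1 = #(Icc 2 n) by simp, show n - b = #(Icc (b + 1) n) by simp,
      ← card_filter_powersetCard_not_subset (Icc_subset_Icc_left (by omega))]
    refine congrArg card (filter_congr fun T hT => ?_)
    obtain ⟨hT₂, hTk⟩ := mem_powersetCard.1 hT
    rw [family_insert_one_iff (by omega) (fun x hx => (mem_Icc.1 (hT₂ hx)).1)
      (card_pos.1 (by omega)), not_subset]
    refine exists_congr fun x => and_congr_right fun hx => ?_
    have := mem_Icc.1 (hT₂ hx)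
    simp only [mem_Icc]
    omega
  · rw [show n - b = #(Icc 2 n) - #(Icc 2 b) by simp; omega,
      show k + 1 + 1 - b = k + 1 - #(Icc 2 b) by simp; omega,
      ← card_filter_powersetCard_subset _ _ _ (Icc_subset_Icc_right (by omega)) (by simp; omega)]
    refine congrArg card (filter_congr fun S hS => ?_)
    obtain ⟨hS₂, hSk⟩ := mem_powersetCard.1 hS
    exact family_iff_of_two_le (fun x hx => (mem_Icc.1 (hS₂ hx)).1) (by omega) (by omega)

/-- |F([2,b]) ∪ F(1,b)| = C(n-1,k-1) - C(n-b,k-1) + C(n-b,k-b+1). -/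
theorem stmt_14 (n k b : ℕ) (hn : 2 * k ≤ n) (hk : 2 ≤ k)
    (hb : 4 ≤ b) (hbk : b ≤ k + 1) :
    ((Finset.Icc 1 n).powerset.filter
      (fun S => S.card = k ∧
        ((∀ j < b - 1, nth S j ≤ j + 2) ∨ (nth S 0 = 1 ∧ nth S 1 ≤ b)))).card
    = Nat.choose (n - 1) (k - 1) - Nat.choose (n - b) (k - 1)
        + Nat.choose (n - b) (k + 1 - b) :=
  stmt_14_general n k b hn hb hbk
end

section
/- Let n ≥ 2k ≥ 4, 4 ≤ b ≤ k+1, let A = F([2,b]) ∪ F({1,b}) ⊆ C([n],k), and let X ⊆ [2,n] with |X| = d and X ∩ [2,b] = ∅. Then the number of members of A disjoint from X equals C(n−d−1, k−1) − C(n−d−b, k−1) + C(n−b−d, k−b+1). -/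
open Finset

section nth

lemma nth_eq_orderEmbOfFin (S : Finset ℕ) (j : Fin #S) : nth S j = S.orderEmbOfFin rfl j := by
  rw [nth, orderEmbOfFin_apply]
  exact List.getD_eq_getElem _ _ (by simp)

lemma nth_mem_s16 (S : Finset ℕ) {j : ℕ} (hj : j < #S) : nth S j ∈ S := by
  rw [nth_eq_orderEmbOfFin S ⟨j, hj⟩]
  exact orderEmbOfFin_mem S rfl _

lemma nth_le_iff (S : Finset ℕ) {j : ℕ} (hj : j < #S) (m : ℕ) :
    nth S j ≤ m ↔ j + 1 ≤ #{x ∈ S | x ≤ m} := by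
  set f := S.orderEmbOfFin rfl
  have hcount : #{x ∈ S | x ≤ m} = #{i | f i ≤ m} := by
    conv_lhs => rw [← map_orderEmbOfFin_univ S rfl]
    rw [filter_map, card_map]
    rfl
  rw [nth_eq_orderEmbOfFin S ⟨j, hj⟩, hcount]
  constructor
  · intro h
    calc j + 1 = #(Iic (⟨j, hj⟩ : Fin #S)) := by rw [Fin.card_Iic]
      _ ≤ _ := card_le_card fun i hi =>
        mem_filter.2 ⟨mem_univ _, (f.monotone (mem_Iic.1 hi)).trans h⟩
  · contrapose!
    intro h
    calc #{i | f i ≤ m} ≤ #(Iio (⟨j, hj⟩ : Fin #S)) := card_le_card fun i hi =>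
          mem_Iio.2 (f.lt_iff_lt.1 ((mem_filter.1 hi).2.trans_lt h))
      _ < j + 1 := by rw [Fin.card_Iio]; exact j.lt_succ_self

variable {S : Finset ℕ} (hS0 : 0 ∉ S)
include hS0

lemma nth_zero_eq_one_iff (hS : S.Nonempty) : nth S 0 = 1 ↔ 1 ∈ S := by
  refine ⟨fun h => h ▸ nth_mem_s16 S hS.card_pos, fun h1 => ?_⟩
  have hle : nth S 0 ≤ 1 := (nth_le_iff S hS.card_pos 1).2 <|
    card_pos.2 ⟨1, mem_filter.2 ⟨h1, le_rfl⟩⟩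
  have hne : nth S 0 ≠ 0 := fun h => hS0 (h ▸ nth_mem_s16 S hS.card_pos)
  omega

lemma nth_one_le_iff_not_disjoint {b : ℕ} (hb : 1 ≤ b) (hS : 2 ≤ #S) (h1 : 1 ∈ S) :
    nth S 1 ≤ b ↔ ¬Disjoint S (Icc 2 b) := by
  have hsplit : {x ∈ S | x ≤ b} = insert 1 (S ∩ Icc 2 b) := by
    ext x
    simp only [mem_filter, mem_insert, mem_inter, mem_Icc]
    constructor
    · rintro ⟨hx, hxb⟩
      have : x ≠ 0 := fun h => hS0 (h ▸ hx)
      by_cases hx1 : x = 1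
      · exact .inl hx1
      · exact .inr ⟨hx, by omega, hxb⟩
    · rintro (rfl | ⟨hx, -, hxb⟩)
      exacts [⟨h1, hb⟩, ⟨hx, hxb⟩]
  rw [nth_le_iff S (by omega), hsplit, card_insert_of_notMem (by simp),
    not_disjoint_iff_nonempty_inter, ← card_pos]
  omega

lemma nth_le_add_two_iff (h1 : 1 ∉ S) {j : ℕ} (hj : j < #S) :
    nth S j ≤ j + 2 ↔ Icc 2 (j + 2) ⊆ S := by
  have hfilter : {x ∈ S | x ≤ j + 2} = S ∩ Icc 2 (j + 2) := by
    ext x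
    simp only [mem_filter, mem_inter, mem_Icc]
    constructor
    · rintro ⟨hx, hxj⟩
      have : x ≠ 0 := fun h => hS0 (h ▸ hx)
      have : x ≠ 1 := fun h => h1 (h ▸ hx)
      exact ⟨hx, by omega, hxj⟩
    · rintro ⟨hx, -, hxj⟩
      exact ⟨hx, hxj⟩
  rw [nth_le_iff S hj, hfilter, ← inter_eq_right]
  constructor
  · intro h
    refine eq_of_subset_of_card_le inter_subset_right ?_
    rw [Nat.card_Icc]
    omega
  · intro h
    rw [h, Nat.card_Icc]
    omega

lemma forall_nth_le_add_two_iff (h1 : 1 ∉ S) {b : ℕ} (hbS : b - 1 ≤ #S) :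
    (∀ j < b - 1, nth S j ≤ j + 2) ↔ Icc 2 b ⊆ S := by
  constructor
  · intro h
    rcases Nat.lt_or_ge b 2 with hb | hb
    · intro x hx
      simp only [mem_Icc] at hx
      omega
    · have := (nth_le_add_two_iff hS0 h1 (j := b - 2) (by omega)).1 (h (b - 2) (by omega))
      rwa [show b - 2 + 2 = b by omega] at this
  · intro h j hj
    exact (nth_le_add_two_iff hS0 h1 (by omega)).2
      ((Icc_subset_Icc_right (by omega)).trans h)

lemma mem_union_families_iff {b : ℕ} (hb : 3 ≤ b) (hS : 2 ≤ #S) (hbS : b - 1 ≤ #S) :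
    ((∀ j < b - 1, nth S j ≤ j + 2) ∨ (nth S 0 = 1 ∧ nth S 1 ≤ b)) ↔
      (1 ∈ S ∧ ¬Disjoint S (Icc 2 b)) ∨ (1 ∉ S ∧ Icc 2 b ⊆ S) := by
  have hne : S.Nonempty := card_pos.1 (by omega)
  by_cases h1 : 1 ∈ S
  · rw [nth_zero_eq_one_iff hS0 hne, ← nth_one_le_iff_not_disjoint hS0 (by omega) hS h1]
    simp only [h1, true_and, not_true_eq_false, false_and, or_false]
    -- a set through `1` in `F([2,b])` has `s₂ ≤ 3 ≤ b`, so it is already in `F({1,b})`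
    exact or_iff_right_of_imp fun h => (h 1 (by omega)).trans (by omega)
  · rw [nth_zero_eq_one_iff hS0 hne, ← forall_nth_le_add_two_iff hS0 h1 hbS]
    simp [h1]

end nth

section counting

variable {α : Type*} [DecidableEq α]

lemma filter_powersetCard_sdiff (U B : Finset α) (k : ℕ) (p : Finset α → Prop)
    [DecidablePred p] :
    {S ∈ (U \ B).powersetCard k | p S} = {S ∈ U.powersetCard k | Disjoint S B ∧ p S} := by
  ext S
  simp only [mem_filter, mem_powersetCard, subset_sdiff]
  tauto

lemma card_filter_powersetCard_mem (U : Finset α) {a : α} (ha : a ∈ U) {k : ℕ} (hk : 1 ≤ k) :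
    #{S ∈ U.powersetCard k | a ∈ S} = (#U - 1).choose (k - 1) := by
  simpa using card_filter_powersetCard_subset {a} U k (singleton_subset_iff.2 ha) (by simpa)

lemma card_filter_powersetCard_mem_not_disjoint_or_superset (U B : Finset α) {a : α}
    (ha : a ∈ U) (haB : a ∉ B) (hBU : B ⊆ U) {k : ℕ} (hk : 1 ≤ k) (hBk : #B ≤ k) :
    #{S ∈ U.powersetCard k | (a ∈ S ∧ ¬Disjoint S B) ∨ (a ∉ S ∧ B ⊆ S)} =
      (#U - 1).choose (k - 1) - (#U - #B - 1).choose (k - 1)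
        + (#U - 1 - #B).choose (k - #B) := by
  rw [filter_or, card_union_of_disjoint (disjoint_filter.2 fun S _ h h' => h'.1 h.1)]
  have hsub : {S ∈ (U \ B).powersetCard k | a ∈ S} ⊆ {S ∈ U.powersetCard k | a ∈ S} :=
    filter_subset_filter _ (powersetCard_mono sdiff_subset)
  have hmeet : {S ∈ U.powersetCard k | a ∈ S ∧ ¬Disjoint S B} =
      {S ∈ U.powersetCard k | a ∈ S} \ {S ∈ (U \ B).powersetCard k | a ∈ S} := by
    rw [filter_powersetCard_sdiff]
    ext S
    simp only [mem_sdiff, mem_filter]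
    tauto
  have hmiss : {S ∈ U.powersetCard k | a ∉ S ∧ B ⊆ S} =
      {S ∈ (U \ {a}).powersetCard k | B ⊆ S} := by
    rw [filter_powersetCard_sdiff]
    simp only [disjoint_singleton_right]
  rw [hmeet, hmiss, card_sdiff_of_subset hsub, card_filter_powersetCard_mem U ha hk,
    card_filter_powersetCard_mem _ (mem_sdiff.2 ⟨ha, haB⟩) hk, card_sdiff_of_subset hBU,
    card_filter_powersetCard_subset B _ k (subset_sdiff.2 ⟨hBU, disjoint_singleton_right.2 haB⟩)
      hBk, card_sdiff_of_subset (singleton_subset_iff.2 ha), card_singleton]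

lemma filter_powerset_inter_eq_empty (V X : Finset α) (k : ℕ) (p q : Finset α → Prop)
    [DecidablePred p] [DecidablePred q] (hpq : ∀ S ⊆ V, #S = k → (p S ↔ q S)) :
    {S ∈ V.powerset | #S = k ∧ p S ∧ S ∩ X = ∅} = {S ∈ (V \ X).powersetCard k | q S} := by
  ext S
  simp only [mem_filter, mem_powerset, mem_powersetCard, subset_sdiff,
    ← disjoint_iff_inter_eq_empty]
  constructor
  · rintro ⟨hSV, hk, hp, hX⟩
    exact ⟨⟨⟨hSV, hX⟩, hk⟩, (hpq S hSV hk).1 hp⟩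
  · rintro ⟨⟨⟨hSV, hX⟩, hk⟩, hq⟩
    exact ⟨hSV, hk, (hpq S hSV hk).2 hq, hX⟩

end counting

/-- For X ⊆ [2,n] with |X| = d and X ∩ [2,b] = ∅, the number of members of
A = F([2,b]) ∪ F(1,b) disjoint from X equals
C(n-d-1,k-1) - C(n-d-b,k-1) + C(n-b-d,k-b+1). -/
theorem stmt_16 (n k b d : ℕ) (hn : 2 * k ≤ n) (hk : 2 ≤ k)
    (hb : 4 ≤ b) (hbk : b ≤ k + 1)
    (X : Finset ℕ) (hX : X ⊆ Finset.Icc 2 n) (hXd : X.card = d)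
    (hXb : X ∩ Finset.Icc 2 b = ∅) :
    ((Finset.Icc 1 n).powerset.filter
      (fun S => S.card = k ∧
        ((∀ j < b - 1, nth S j ≤ j + 2) ∨ (nth S 0 = 1 ∧ nth S 1 ≤ b)) ∧
        S ∩ X = ∅)).card
    = Nat.choose (n - d - 1) (k - 1) - Nat.choose (n - d - b) (k - 1)
        + Nat.choose (n - b - d) (k + 1 - b) := by
  have hXn : X ⊆ Icc 1 n := hX.trans (Icc_subset_Icc_left (by omega))
  have h1U : 1 ∈ Icc 1 n \ X :=
    mem_sdiff.2 ⟨mem_Icc.2 ⟨le_rfl, by omega⟩, fun h => by simpa using hX h⟩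
  have hBU : Icc 2 b ⊆ Icc 1 n \ X := subset_sdiff.2
    ⟨Icc_subset_Icc (by omega) (by omega), disjoint_iff_inter_eq_empty.2 (inter_comm X _ ▸ hXb)⟩
  have hU : #(Icc 1 n \ X) = n - d := by
    rw [card_sdiff_of_subset hXn, Nat.card_Icc, hXd]; omega
  rw [filter_powerset_inter_eq_empty _ _ _ _ _ fun S hS hSk =>
      mem_union_families_iff (fun h => by simpa using hS h) (by omega) (by omega) (by omega),
    card_filter_powersetCard_mem_not_disjoint_or_superset _ _ h1U (by simp) hBU (by omega)
      (by rw [Nat.card_Icc]; omega), hU, Nat.card_Icc]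
  rw [show n - d - (b + 1 - 2) - 1 = n - d - b by omega,
    show n - d - 1 - (b + 1 - 2) = n - b - d by omega, show k - (b + 1 - 2) = k + 1 - b by omega]
end
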